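/- Let n ≥ 1. For every w ∈ W there exists a unique permutation η_w ∈ Sₙ such that Φ_w ∩ Φ⁺⁰ = Φ_{η_w}. -/

import Mathlib

open Pointwise

/-- The `i`-th standard basis vector of `ℤⁿ`. -/
def stdBasis (n : ℕ) (i : Fin n) : Fin n → ℤ := Pi.single i 1

/-- The positive roots of type `Cₙ`: `eᵢ - eⱼ` for `i < j` and `eᵢ + eⱼ` for `i ≤ j`. -/
def PhiPos (n : ℕ) : Set (Fin n → ℤ) :=
  {v | ∃ i j : Fin n, i < j ∧ v = stdBasis n i - stdBasis n j} ∪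
  {v | ∃ i j : Fin n, i ≤ j ∧ v = stdBasis n i + stdBasis n j}

/-- Membership in the hyperoctahedral group `W`: a linear automorphism of `ℤⁿ` sending each
standard basis vector to `±` a standard basis vector. -/
def IsSigned {n : ℕ} (w : (Fin n → ℤ) ≃ₗ[ℤ] (Fin n → ℤ)) : Prop :=
  ∀ j : Fin n, ∃ i : Fin n,
    w (stdBasis n j) = stdBasis n i ∨ w (stdBasis n j) = - stdBasis n i

/-- `Φ_w = w(−Φ⁺) ∩ Φ⁺`. -/
def PhiW {n : ℕ} (w : (Fin n → ℤ) ≃ₗ[ℤ] (Fin n → ℤ)) : Set (Fin n → ℤ) :=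
  (⇑w '' (-(PhiPos n))) ∩ PhiPos n

/-- The permutation `σ` acting linearly on `ℤⁿ` by `eⱼ ↦ e_{σ(j)}`. -/
def permL {n : ℕ} (σ : Equiv.Perm (Fin n)) : (Fin n → ℤ) ≃ₗ[ℤ] (Fin n → ℤ) where
  toFun v := fun i => v (σ.symm i)
  invFun v := fun i => v (σ i)
  map_add' _ _ := rfl
  map_smul' _ _ := rfl
  left_inv v := by funext i; simp
  right_inv v := by funext i; simp


/-- `Φ⁺⁰`: the roots `eᵢ - eⱼ` for `i < j`. -/
def Phi0 (n : ℕ) : Set (Fin n → ℤ) :=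
  {v | ∃ i j : Fin n, i < j ∧ v = stdBasis n i - stdBasis n j}

/-!
Write `w⁻¹ eᵢ = ±e_{π i}` and give each index `i` the key `π i` if the sign is `+` and `2n - π i`
if it is `-`. A case check on the four sign patterns shows that for `i < j` the root `eᵢ - eⱼ`
lies in `Φ_w` exactly when the key of `j` is smaller than that of `i`. For `w = σ ∈ Sₙ` all signs
are `+` and `Φ_σ ⊆ Φ⁺⁰`, so `Φ_w ∩ Φ⁺⁰ = Φ_η` says that `η` lists the indices in increasing
order of their keys; since the keys are distinct, exactly one permutation does so.
-/

section SignedPermutation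

variable {n : ℕ}

theorem stdBasis_apply (i j : Fin n) : stdBasis n i j = if j = i then 1 else 0 :=
  Pi.single_apply i 1 j

theorem sum_stdBasis (i : Fin n) : ∑ k, stdBasis n i k = 1 := by
  simp [stdBasis]

theorem stdBasis_ne_neg (i j : Fin n) : stdBasis n i ≠ -stdBasis n j := by
  intro h
  have := congrFun h i
  simp only [stdBasis_apply, Pi.neg_apply] at this
  split_ifs at this <;> omega

theorem eq_of_stdBasis_eq {i j : Fin n} (h : stdBasis n i = stdBasis n j) : i = j := by
  by_contra hij
  simpa [stdBasis_apply, hij] using congrFun h i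

theorem sum_eq_zero_or_two_of_mem_PhiPos {v : Fin n → ℤ} (hv : v ∈ PhiPos n) :
    ∑ k, v k = 0 ∨ ∑ k, v k = 2 := by
  rcases hv with ⟨i, j, -, rfl⟩ | ⟨i, j, -, rfl⟩
  · left; simp [Finset.sum_sub_distrib, sum_stdBasis]
  · right; simp [Finset.sum_add_distrib, sum_stdBasis]

theorem add_mem_PhiPos (a b : Fin n) : stdBasis n a + stdBasis n b ∈ PhiPos n := by
  rcases le_total a b with h | h
  · exact Or.inr ⟨a, b, h, rfl⟩
  · exact Or.inr ⟨b, a, h, add_comm _ _⟩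

theorem neg_add_notMem_PhiPos (a b : Fin n) : -(stdBasis n a + stdBasis n b) ∉ PhiPos n := by
  intro h
  simpa [Finset.sum_add_distrib, sum_stdBasis] using sum_eq_zero_or_two_of_mem_PhiPos h

theorem sub_mem_PhiPos_iff {a b : Fin n} (hab : a ≠ b) :
    stdBasis n a - stdBasis n b ∈ PhiPos n ↔ a < b := by
  refine ⟨?_, fun h => Or.inl ⟨a, b, h, rfl⟩⟩
  rintro (⟨p, q, hpq, h⟩ | ⟨p, q, -, h⟩)
  · have ha := congrFun h a
    have hb := congrFun h b
    simp only [Pi.sub_apply, stdBasis_apply, if_neg hab, if_neg hab.symm] at ha hb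
    have hap : a = p := by by_contra; split_ifs at ha <;> omega
    have hbq : b = q := by by_contra; split_ifs at hb <;> omega
    exact hap ▸ hbq ▸ hpq
  · have := congrArg (fun v => ∑ k, v k) h
    simp [Finset.sum_sub_distrib, Finset.sum_add_distrib, sum_stdBasis] at this

theorem mem_PhiW_iff {w : (Fin n → ℤ) ≃ₗ[ℤ] (Fin n → ℤ)} {v : Fin n → ℤ} :
    v ∈ PhiW w ↔ v ∈ PhiPos n ∧ -w.symm v ∈ PhiPos n := by
  constructor
  · rintro ⟨⟨x, hx, rfl⟩, hv⟩
    exact ⟨hv, by simpa using hx⟩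
  · rintro ⟨hv, hw⟩
    exact ⟨⟨w.symm v, Set.mem_neg.mpr hw, w.apply_symm_apply v⟩, hv⟩

def IsSignedBy (w : (Fin n → ℤ) ≃ₗ[ℤ] (Fin n → ℤ)) (π : Equiv.Perm (Fin n)) : Prop :=
  ∀ i, w.symm (stdBasis n i) = stdBasis n (π i) ∨ w.symm (stdBasis n i) = -stdBasis n (π i)

theorem IsSigned.exists_isSignedBy {w : (Fin n → ℤ) ≃ₗ[ℤ] (Fin n → ℤ)} (hw : IsSigned w) :
    ∃ π, IsSignedBy w π := by
  choose p hp using hw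
  have hp_inj : Function.Injective p := by
    intro j k hjk
    have hsign : stdBasis n j = stdBasis n k ∨ stdBasis n j = -stdBasis n k := by
      rcases hp j with hj | hj <;> rcases hp k with hk | hk <;> rw [hjk] at hj
      exacts [.inl (w.injective (hj.trans hk.symm)), .inr (w.injective (by simp [hj, hk])),
        .inr (w.injective (by simp [hj, hk])), .inl (w.injective (hj.trans hk.symm))]
    exact hsign.elim eq_of_stdBasis_eq fun h => absurd h (stdBasis_ne_neg j k)
  let π := Equiv.ofBijective p (Finite.injective_iff_bijective.mp hp_inj)
  refine ⟨π.symm, fun i => ?_⟩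
  have hpi : p (π.symm i) = i := π.apply_symm_apply i
  rcases hp (π.symm i) with h | h <;> rw [hpi] at h
  · exact .inl (w.symm_apply_eq.mpr h.symm)
  · exact .inr (w.symm_apply_eq.mpr (by rw [map_neg, h, neg_neg]))

theorem permL_symm_stdBasis (σ : Equiv.Perm (Fin n)) (i : Fin n) :
    (permL σ).symm (stdBasis n i) = stdBasis n (σ.symm i) := by
  funext k
  change stdBasis n i (σ k) = stdBasis n (σ.symm i) k
  simp only [stdBasis_apply, Equiv.eq_symm_apply]

theorem isSignedBy_permL (σ : Equiv.Perm (Fin n)) : IsSignedBy (permL σ) σ.symm :=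
  fun i => .inl (permL_symm_stdBasis σ i)

/-- Indices with sign `+` are ordered by `π`; those with sign `-` come after them, in reverse
order. -/
def signKey (w : (Fin n → ℤ) ≃ₗ[ℤ] (Fin n → ℤ)) (π : Equiv.Perm (Fin n)) (i : Fin n) : ℤ :=
  if w.symm (stdBasis n i) = stdBasis n (π i) then π i else 2 * n - π i

variable {w : (Fin n → ℤ) ≃ₗ[ℤ] (Fin n → ℤ)} {π : Equiv.Perm (Fin n)}

theorem IsSignedBy.signKey_cases (hπ : IsSignedBy w π) (i : Fin n) :
    (w.symm (stdBasis n i) = stdBasis n (π i) ∧ signKey w π i = π i) ∨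
      (w.symm (stdBasis n i) = -stdBasis n (π i) ∧ signKey w π i = 2 * n - π i) := by
  by_cases h : w.symm (stdBasis n i) = stdBasis n (π i)
  · exact .inl ⟨h, if_pos h⟩
  · exact .inr ⟨(hπ i).resolve_left h, if_neg h⟩

theorem IsSignedBy.signKey_injective (hπ : IsSignedBy w π) : Function.Injective (signKey w π) := by
  intro i j hij
  have hi := (π i).isLt
  have hj := (π j).isLt
  apply π.injective
  rcases hπ.signKey_cases i with ⟨-, hki⟩ | ⟨-, hki⟩ <;>
    rcases hπ.signKey_cases j with ⟨-, hkj⟩ | ⟨-, hkj⟩ <;>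
    rw [hki, hkj] at hij <;> exact Fin.ext (by omega)

theorem IsSignedBy.sub_mem_PhiW_iff (hπ : IsSignedBy w π) {i j : Fin n} (hij : i < j) :
    stdBasis n i - stdBasis n j ∈ PhiW w ↔ signKey w π j < signKey w π i := by
  have hπij : π i ≠ π j := π.injective.ne hij.ne
  have hi := (π i).isLt
  have hj := (π j).isLt
  rw [mem_PhiW_iff, map_sub]
  simp only [(sub_mem_PhiPos_iff hij.ne).mpr hij, true_and]
  rcases hπ.signKey_cases i with ⟨hwi, hki⟩ | ⟨hwi, hki⟩ <;>
    rcases hπ.signKey_cases j with ⟨hwj, hkj⟩ | ⟨hwj, hkj⟩ <;>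
    rw [hwi, hwj, hki, hkj]
  · rw [neg_sub, sub_mem_PhiPos_iff hπij.symm, Fin.lt_def]
    omega
  · rw [sub_neg_eq_add]
    simp only [neg_add_notMem_PhiPos, false_iff]
    omega
  · rw [neg_sub, sub_neg_eq_add, add_comm]
    simp only [add_mem_PhiPos, true_iff]
    omega
  · rw [neg_sub, sub_neg_eq_add, neg_add_eq_sub, sub_mem_PhiPos_iff hπij, Fin.lt_def]
    omega

theorem PhiW_permL_subset_Phi0 (σ : Equiv.Perm (Fin n)) : PhiW (permL σ) ⊆ Phi0 n := by
  intro v hv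
  rcases hv.2 with h0 | ⟨a, b, -, rfl⟩
  · exact h0
  · have h := (mem_PhiW_iff.mp hv).2
    rw [map_add, permL_symm_stdBasis, permL_symm_stdBasis] at h
    exact absurd h (neg_add_notMem_PhiPos _ _)

theorem sub_mem_PhiW_permL_iff (σ : Equiv.Perm (Fin n)) {i j : Fin n} (hij : i < j) :
    stdBasis n i - stdBasis n j ∈ PhiW (permL σ) ↔ σ.symm j < σ.symm i := by
  rw [(isSignedBy_permL σ).sub_mem_PhiW_iff hij, signKey, signKey,
    if_pos (permL_symm_stdBasis σ i), if_pos (permL_symm_stdBasis σ j), Nat.cast_lt, Fin.val_fin_lt]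

end SignedPermutation

theorem Equiv.Perm.strictMono_comp_iff {α β : Type*} [LinearOrder α] [LinearOrder β] {g : α → β}
    (hg : Function.Injective g) (τ : Equiv.Perm α) :
    StrictMono (g ∘ τ) ↔ ∀ i j, i < j → (τ.symm j < τ.symm i ↔ g j < g i) := by
  refine ⟨fun h i j _ => by simpa using (h.lt_iff_lt (a := τ.symm j) (b := τ.symm i)).symm,
    fun h a b hab => ?_⟩
  rcases lt_trichotomy (τ a) (τ b) with hlt | heq | hgt
  · have := (h _ _ hlt).not.mp (by simpa using hab.not_gt)
    exact (not_lt.mp this).lt_of_ne (hg.ne (τ.injective.ne hab.ne))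
  · exact absurd (τ.injective heq) hab.ne
  · exact (h _ _ hgt).mp (by simpa using hab)

theorem Tuple.existsUnique_strictMono_comp {n : ℕ} {α : Type*} [LinearOrder α] {g : Fin n → α}
    (hg : Function.Injective g) : ∃! τ : Equiv.Perm (Fin n), StrictMono (g ∘ τ) := by
  refine ⟨sort g, (monotone_sort g).strictMono_of_injective (hg.comp (sort g).injective),
    fun τ hτ => ?_⟩
  have h := unique_monotone hτ.monotone (monotone_sort g)
  exact Equiv.ext fun i => hg (congrFun h i)

theorem IsSignedBy.PhiW_inter_Phi0_eq_PhiW_permL_iff {n : ℕ}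
    {w : (Fin n → ℤ) ≃ₗ[ℤ] (Fin n → ℤ)} {π : Equiv.Perm (Fin n)} (hπ : IsSignedBy w π)
    (τ : Equiv.Perm (Fin n)) :
    PhiW w ∩ Phi0 n = PhiW (permL τ) ↔ StrictMono (signKey w π ∘ τ) := by
  rw [τ.strictMono_comp_iff hπ.signKey_injective]
  constructor
  · intro h i j hij
    rw [← sub_mem_PhiW_permL_iff τ hij, ← hπ.sub_mem_PhiW_iff hij, ← h]
    exact ⟨And.left, fun hv => ⟨hv, i, j, hij, rfl⟩⟩
  · intro h
    ext v
    constructor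
    · rintro ⟨hv, i, j, hij, rfl⟩
      exact (sub_mem_PhiW_permL_iff τ hij).mpr ((h i j hij).mpr ((hπ.sub_mem_PhiW_iff hij).mp hv))
    · intro hv
      obtain ⟨i, j, hij, rfl⟩ := PhiW_permL_subset_Phi0 τ hv
      refine ⟨(hπ.sub_mem_PhiW_iff hij).mpr ((h i j hij).mp ?_), i, j, hij, rfl⟩
      exact (sub_mem_PhiW_permL_iff τ hij).mp hv

theorem stmt5_general (n : ℕ) (w : (Fin n → ℤ) ≃ₗ[ℤ] (Fin n → ℤ)) (hw : IsSigned w) :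
    ∃! η : Equiv.Perm (Fin n), PhiW w ∩ Phi0 n = PhiW (permL η) := by
  obtain ⟨π, hπ⟩ := hw.exists_isSignedBy
  simpa only [hπ.PhiW_inter_Phi0_eq_PhiW_permL_iff] using
    Tuple.existsUnique_strictMono_comp hπ.signKey_injective

theorem stmt5 (n : ℕ) (hn : 1 ≤ n) (w : (Fin n → ℤ) ≃ₗ[ℤ] (Fin n → ℤ)) (hw : IsSigned w) :
    ∃! η : Equiv.Perm (Fin n), PhiW w ∩ Phi0 n = PhiW (permL η) :=
  stmt5_general n w hw
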